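/- arXiv:1610.00796 — 3 statements merged into one kernel-verified Lean document; each statement's English description precedes it below -/
import Mathlib

section
/- Let (X, T) be a measurable dynamical system with invariant probability measure ν, and let φ: X → ℝ be measurable with Birkhoff averages (1/n)∑_{i=0}^{n-1} φ(T^i x) converging to λ < 0 at a point x. Then there exists j ≥ 0 such that the point x' = T^j x satisfies ∑_{i=0}^{n-1} φ(T^i x') < (3λ/4)·n for every n ≥ 1. -/
/-!
If no iterate of `x` is a hyperbolic time, then from every time `j` there is a block
`[j, j + n)` on which the Birkhoff sum is at least `(3l/4) n`. Concatenating such blocks from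
time `0` yields arbitrarily long initial sums at least `(3l/4) m`, so the Birkhoff average
limit `l` would satisfy `3l/4 ≤ l`, impossible for `l < 0`.
-/

open Filter

theorem frequently_le_of_forall_exists_block {S : ℕ → ℝ} {c : ℝ} (h0 : S 0 = 0)
    (hblock : ∀ j, ∃ n, 1 ≤ n ∧ c * n ≤ S (j + n) - S j) :
    ∃ᶠ m in atTop, c * m ≤ S m := by
  rw [frequently_atTop]
  intro a
  induction a with
  | zero => exact ⟨0, le_rfl, by simp [h0]⟩
  | succ a ih =>
    obtain ⟨m, ham, hm⟩ := ih
    obtain ⟨n, hn, hblock⟩ := hblock m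
    refine ⟨m + n, by omega, ?_⟩
    push_cast
    linarith

theorem exists_forall_block_lt_of_tendsto_div {S : ℕ → ℝ} {l c : ℝ} (h0 : S 0 = 0)
    (hS : Tendsto (fun n : ℕ => S n / n) atTop (nhds l)) (hlc : l < c) :
    ∃ j, ∀ n, 1 ≤ n → S (j + n) - S j < c * n := by
  by_contra! hblock
  have hfreq : ∃ᶠ m : ℕ in atTop, c ≤ S m / m := by
    refine ((frequently_le_of_forall_exists_block h0 hblock).and_eventually
      (eventually_gt_atTop 0)).mono fun m ⟨hm, hpos⟩ => ?_
    rwa [le_div_iff₀ (by exact_mod_cast hpos)]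
  exact hlc.not_ge (ge_of_tendsto_of_frequently hS hfreq)

/-- Hyperbolic time claim (Lemma 4.6): if the Birkhoff averages of `φ` at `x` converge to
`l < 0`, then some iterate `x' = T^j x` has all Birkhoff sums below `(3l/4) n`. -/
theorem stmt0 {X : Type*} (T : X → X) (φ : X → ℝ) (x : X) (l : ℝ) (hl : l < 0)
    (hbirk : Tendsto (fun n : ℕ => (∑ i ∈ Finset.range n, φ (T^[i] x)) / n) atTop (nhds l)) :
    ∃ j : ℕ, ∀ n : ℕ, 1 ≤ n →
      (∑ i ∈ Finset.range n, φ (T^[i] (T^[j] x))) < (3 * l / 4) * n := by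
  obtain ⟨j, hj⟩ := exists_forall_block_lt_of_tendsto_div (S := fun n => birkhoffSum T φ n x)
    (birkhoffSum_zero T φ x) hbirk (by linarith : l < 3 * l / 4)
  refine ⟨j, fun n hn => ?_⟩
  have hblock := hj n hn
  rwa [birkhoffSum_add, add_sub_cancel_left] at hblock
end

section
/- Let (s_j)_{j≥1} be a sequence of positive-integer-valued random variables on a probability space such that for constants C₀ > 0, ρ₀ < 1 one has, for every i and every k₁,…,k_i, P(s₁=k₁,…,s_i=k_i) ≤ ∏_{j=1}^{i} C₀ρ₀^{k_j}, and such that P(the process survives i runs) ≤ (1−a)^i for some a > 0. Set R = ∑_{j=1}^{K} s_j where K is the (random) number of runs. Then there exist C₂ > 0 and ρ₂ < 1 such that P(R = n) ≤ C₂·ρ₂^n for all n; in particular P(R > N) ≤ C₂'·ρ₂^N. -/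
/-!
Split `P(R = n)` according to the number of runs `K = i`. Survival gives
`P(R = n, K = i) ≤ (1 - a)^i`. Covering `{s₁ + ⋯ + sᵢ = n}` by the compositions of `n` and
tilting `ρ₀^n = (ρ₀/ρ₁)^n ρ₁^n` for some `ρ₀ < ρ₁ < 1` gives
`P(R = n, K = i) ≤ (ρ₀/ρ₁)^n M^i` with `M = C₀ / (1 - ρ₁)`, whatever the size of `M`.
Interpolating, `min(x, y) ≤ x^(1-θ) y^θ` with `θ > 0` so small that `(1 - a)^(1-θ) M^θ < 1`
yields a bound that is summable in `i` and geometric in `n`; this replaces the paper's choice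
of `δ` through the entropy of `(n choose δn)`.
-/

open MeasureTheory Finset Filter Topology

lemma sum_piAntidiag_prod_le {ι : Type*} [DecidableEq ι] (S : Finset ι) (n : ℕ) (g : ℕ → ℝ)
    (hg : ∀ m, 0 ≤ g m) :
    ∑ k ∈ S.piAntidiag n, ∏ j ∈ S, g (k j) ≤ (∑ m ∈ range (n + 1), g m) ^ #S := by
  set restrict : (ι → ℕ) → (j : ι) → j ∈ S → ℕ := fun k j _ => k j
  have hinj : Set.InjOn restrict (S.piAntidiag n) := by
    intro k hk l hl hkl
    ext j
    by_cases hj : j ∈ S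
    · exact congr_fun (congr_fun hkl j) hj
    · have hk0 := mt ((mem_piAntidiag.1 hk).2 j) hj
      have hl0 := mt ((mem_piAntidiag.1 hl).2 j) hj
      simp_all
  have hbox : (S.piAntidiag n).image restrict ⊆ S.pi fun _ => range (n + 1) := by
    intro p hp
    obtain ⟨k, hk, rfl⟩ := mem_image.1 hp
    refine mem_pi.2 fun j hj => mem_range.2 (Nat.lt_succ_of_le ?_)
    rw [← (mem_piAntidiag.1 hk).1]
    exact single_le_sum (fun _ _ => Nat.zero_le _) hj
  calc ∑ k ∈ S.piAntidiag n, ∏ j ∈ S, g (k j)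
      = ∑ p ∈ (S.piAntidiag n).image restrict, ∏ x ∈ S.attach, g (p x.1 x.2) := by
        rw [sum_image hinj]
        exact sum_congr rfl fun k _ => (prod_attach S fun j => g (k j)).symm
    _ ≤ ∑ p ∈ S.pi fun _ => range (n + 1), ∏ x ∈ S.attach, g (p x.1 x.2) :=
        sum_le_sum_of_subset_of_nonneg hbox fun _ _ _ => prod_nonneg fun _ _ => hg _
    _ = (∑ m ∈ range (n + 1), g m) ^ #S := by
        rw [← prod_const, prod_sum]

lemma min_le_rpow_mul_rpow {x y θ : ℝ} (hx : 0 ≤ x) (hy : 0 ≤ y) (hθ0 : 0 ≤ θ) (hθ1 : θ ≤ 1) :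
    min x y ≤ x ^ (1 - θ) * y ^ θ := by
  have hm : 0 ≤ min x y := le_min hx hy
  calc min x y = min x y ^ (1 - θ) * min x y ^ θ := by
        rw [← Real.rpow_add' hm (by norm_num), sub_add_cancel, Real.rpow_one]
    _ ≤ x ^ (1 - θ) * y ^ θ := by
        have hθ : 0 ≤ 1 - θ := by linarith
        gcongr
        exacts [min_le_left x y, min_le_right x y]

lemma exists_rpow_mul_rpow_lt_one {b M : ℝ} (hb0 : 0 < b) (hb1 : b < 1) (hM : 0 < M) :
    ∃ θ : ℝ, 0 < θ ∧ θ < 1 ∧ b ^ (1 - θ) * M ^ θ < 1 := by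
  have hcont : ContinuousAt (fun θ : ℝ => b ^ (1 - θ) * M ^ θ) 0 := by
    fun_prop (disch := positivity)
  have hlim : ∀ᶠ θ : ℝ in 𝓝 0, θ < 1 ∧ b ^ (1 - θ) * M ^ θ < 1 := by
    refine (gt_mem_nhds zero_lt_one).and (hcont.eventually (gt_mem_nhds ?_))
    simpa using hb1
  obtain ⟨θ, ⟨hθ1, hθ⟩, hθ0⟩ :=
    ((hlim.filter_mono nhdsWithin_le_nhds).and (self_mem_nhdsWithin (s := Set.Ioi (0 : ℝ)))).exists
  exact ⟨θ, hθ0, hθ1, hθ⟩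

lemma min_pow_le_rpow_pow {b σ M θ : ℝ} (hb : 0 ≤ b) (hσ : 0 ≤ σ) (hM : 0 ≤ M) (hθ0 : 0 ≤ θ)
    (hθ1 : θ ≤ 1) (i n : ℕ) :
    min (b ^ i) (σ ^ n * M ^ i) ≤ (b ^ (1 - θ) * M ^ θ) ^ i * (σ ^ θ) ^ n := by
  refine (min_le_rpow_mul_rpow (by positivity) (by positivity) hθ0 hθ1).trans_eq ?_
  rw [Real.mul_rpow (by positivity) (by positivity), ← Real.rpow_pow_comm hb,
    ← Real.rpow_pow_comm hσ, ← Real.rpow_pow_comm hM, mul_pow]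
  ring

lemma tsum_ofReal_mul_geometric {A r : ℝ} (hA : 0 ≤ A) (hr0 : 0 ≤ r) (hr1 : r < 1) :
    ∑' m : ℕ, ENNReal.ofReal (A * r ^ m) = ENNReal.ofReal (A * (1 - r)⁻¹) := by
  rw [← ENNReal.ofReal_tsum_of_nonneg (fun m => by positivity)
    ((summable_geometric_of_lt_one hr0 hr1).mul_left A), tsum_mul_left,
    tsum_geometric_of_lt_one hr0 hr1]

section
variable {Ω : Type*} [MeasurableSpace Ω] {μ : Measure Ω}

lemma measure_sum_eq_le {ι : Type*} [DecidableEq ι] (s : ι → Ω → ℕ) (S : Finset ι)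
    {C₀ ρ₀ ρ₁ : ℝ} (hC₀ : 0 ≤ C₀) (hρ₀ : 0 < ρ₀) (hρ₀₁ : ρ₀ ≤ ρ₁) (hρ₁ : ρ₁ < 1)
    (hjoint : ∀ k : ι → ℕ,
      μ {ω | ∀ j ∈ S, s j ω = k j} ≤ ENNReal.ofReal (∏ j ∈ S, C₀ * ρ₀ ^ k j))
    (n : ℕ) :
    μ {ω | ∑ j ∈ S, s j ω = n} ≤ ENNReal.ofReal ((ρ₀ / ρ₁) ^ n * (C₀ / (1 - ρ₁)) ^ #S) := by
  have hρ₁0 : 0 < ρ₁ := hρ₀.trans_le hρ₀₁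
  have hcover : {ω | ∑ j ∈ S, s j ω = n} ⊆
      ⋃ k ∈ S.piAntidiag n, {ω | ∀ j ∈ S, s j ω = k j} := by
    intro ω hω
    refine Set.mem_iUnion₂.2 ⟨fun j => if j ∈ S then s j ω else 0, mem_piAntidiag.2 ⟨?_, ?_⟩, ?_⟩
    · rw [sum_ite_mem, inter_self]
      exact hω
    · intro j hj
      by_contra h
      simp [h] at hj
    · intro j hj
      simp [hj]
  have htilt : ∀ k ∈ S.piAntidiag n,
      ∏ j ∈ S, C₀ * ρ₀ ^ k j = (ρ₀ / ρ₁) ^ n * ∏ j ∈ S, C₀ * ρ₁ ^ k j := by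
    intro k hk
    rw [prod_mul_distrib, prod_mul_distrib, prod_pow_eq_pow_sum, prod_pow_eq_pow_sum,
      (mem_piAntidiag.1 hk).1, div_pow]
    field_simp
  have hgeom : ∑ m ∈ range (n + 1), C₀ * ρ₁ ^ m ≤ C₀ / (1 - ρ₁) := by
    rw [← mul_sum, range_eq_Ico, div_eq_mul_inv]
    gcongr
    simpa using geom_sum_Ico_le_of_lt_one (m := 0) (n := n + 1) hρ₁0.le hρ₁
  calc μ {ω | ∑ j ∈ S, s j ω = n}
      ≤ ∑ k ∈ S.piAntidiag n, μ {ω | ∀ j ∈ S, s j ω = k j} :=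
        (measure_mono hcover).trans (measure_biUnion_finset_le _ _)
    _ ≤ ∑ k ∈ S.piAntidiag n, ENNReal.ofReal (∏ j ∈ S, C₀ * ρ₀ ^ k j) :=
        sum_le_sum fun k _ => hjoint k
    _ = ENNReal.ofReal (∑ k ∈ S.piAntidiag n, ∏ j ∈ S, C₀ * ρ₀ ^ k j) :=
        (ENNReal.ofReal_sum_of_nonneg fun _ _ => by positivity).symm
    _ ≤ ENNReal.ofReal ((ρ₀ / ρ₁) ^ n * (C₀ / (1 - ρ₁)) ^ #S) := by
        refine ENNReal.ofReal_le_ofReal ?_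
        rw [sum_congr rfl htilt, ← mul_sum]
        gcongr
        exact (sum_piAntidiag_prod_le S n _ fun _ => by positivity).trans
          (pow_le_pow_left₀ (sum_nonneg fun _ _ => by positivity) hgeom _)

lemma measure_eq_and_eq_le_min {s : ℕ → Ω → ℕ} {K R : Ω → ℕ} {C₀ ρ₀ ρ₁ b : ℝ} (hC₀ : 0 ≤ C₀)
    (hρ₀ : 0 < ρ₀) (hρ₀₁ : ρ₀ ≤ ρ₁) (hρ₁ : ρ₁ < 1)
    (hjoint : ∀ i (k : ℕ → ℕ), μ {ω | ∀ j ∈ Icc 1 i, s j ω = k j}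
      ≤ ENNReal.ofReal (∏ j ∈ Icc 1 i, C₀ * ρ₀ ^ k j))
    (hsurv : ∀ i, μ {ω | i ≤ K ω} ≤ ENNReal.ofReal (b ^ i))
    (hR : ∀ ω, R ω = ∑ j ∈ Icc 1 (K ω), s j ω) (n i : ℕ) :
    μ {ω | R ω = n ∧ K ω = i}
      ≤ ENNReal.ofReal (min (b ^ i) ((ρ₀ / ρ₁) ^ n * (C₀ / (1 - ρ₁)) ^ i)) := by
  have hrun : {ω | R ω = n ∧ K ω = i} ⊆ {ω | i ≤ K ω} := fun ω ⟨_, hi⟩ => hi.ge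
  have hsum : {ω | R ω = n ∧ K ω = i} ⊆ {ω | ∑ j ∈ Icc 1 i, s j ω = n} :=
    fun ω ⟨hn, hi⟩ => by subst hi; exact (hR ω).symm.trans hn
  have hcomp := measure_sum_eq_le s _ hC₀ hρ₀ hρ₀₁ hρ₁ (hjoint i) n
  rw [Nat.card_Icc, add_tsub_cancel_right] at hcomp
  rw [ENNReal.ofReal_min]
  exact le_min ((measure_mono hrun).trans (hsurv i)) ((measure_mono hsum).trans hcomp)

lemma measure_eq_le_of_forall_measure_eq_and_eq_le {R K : Ω → ℕ} {c ρ : ℝ} (hc0 : 0 ≤ c)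
    (hc1 : c < 1) (hρ : 0 ≤ ρ)
    (h : ∀ n i, μ {ω | R ω = n ∧ K ω = i} ≤ ENNReal.ofReal (c ^ i * ρ ^ n)) (n : ℕ) :
    μ {ω | R ω = n} ≤ ENNReal.ofReal ((1 - c)⁻¹ * ρ ^ n) := by
  have hcover : {ω | R ω = n} ⊆ ⋃ i, {ω | R ω = n ∧ K ω = i} := fun ω hω =>
    Set.mem_iUnion.2 ⟨K ω, hω, rfl⟩
  calc μ {ω | R ω = n} ≤ ∑' i, μ {ω | R ω = n ∧ K ω = i} :=
        (measure_mono hcover).trans (measure_iUnion_le _)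
    _ ≤ ∑' i, ENNReal.ofReal (ρ ^ n * c ^ i) :=
        ENNReal.tsum_le_tsum fun i => (h n i).trans_eq (by rw [mul_comm])
    _ = ENNReal.ofReal ((1 - c)⁻¹ * ρ ^ n) := by
        rw [tsum_ofReal_mul_geometric (by positivity) hc0 hc1, mul_comm]

lemma measure_le_le_of_forall_measure_eq_le {R : Ω → ℕ} {C ρ : ℝ} (hC : 0 ≤ C) (hρ0 : 0 ≤ ρ)
    (hρ1 : ρ < 1) (h : ∀ n, μ {ω | R ω = n} ≤ ENNReal.ofReal (C * ρ ^ n)) (N : ℕ) :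
    μ {ω | N ≤ R ω} ≤ ENNReal.ofReal (C * (1 - ρ)⁻¹ * ρ ^ N) := by
  have hcover : {ω | N ≤ R ω} ⊆ ⋃ m, {ω | R ω = N + m} := fun ω hω =>
    Set.mem_iUnion.2 ⟨R ω - N, (Nat.add_sub_cancel' hω).symm⟩
  calc μ {ω | N ≤ R ω} ≤ ∑' m, μ {ω | R ω = N + m} :=
        (measure_mono hcover).trans (measure_iUnion_le _)
    _ ≤ ∑' m, ENNReal.ofReal (C * ρ ^ N * ρ ^ m) :=
        ENNReal.tsum_le_tsum fun m => (h _).trans_eq (by rw [pow_add, mul_assoc])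
    _ = ENNReal.ofReal (C * (1 - ρ)⁻¹ * ρ ^ N) := by
        rw [tsum_ofReal_mul_geometric (by positivity) hρ0 hρ1]
        ring_nf

end

theorem stmt8_general {Ω : Type*} [MeasurableSpace Ω] (μ : Measure Ω) [IsProbabilityMeasure μ]
    (s : ℕ → Ω → ℕ) (K : Ω → ℕ) (R : Ω → ℕ)
    (C₀ ρ₀ a : ℝ) (hC₀ : 0 < C₀) (hρ₀0 : 0 < ρ₀) (hρ₀1 : ρ₀ < 1)
    (ha0 : 0 < a) (ha1 : a < 1)
    (hjoint : ∀ i : ℕ, 1 ≤ i → ∀ k : ℕ → ℕ,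
      μ {ω | ∀ j ∈ Finset.Icc 1 i, s j ω = k j}
        ≤ ENNReal.ofReal (∏ j ∈ Finset.Icc 1 i, C₀ * ρ₀ ^ k j))
    (hsurv : ∀ i : ℕ, μ {ω | i ≤ K ω} ≤ ENNReal.ofReal ((1 - a) ^ i))
    (hR : ∀ ω, R ω = ∑ j ∈ Finset.Icc 1 (K ω), s j ω) :
    ∃ C₂ ρ₂ : ℝ, 0 < C₂ ∧ 0 < ρ₂ ∧ ρ₂ < 1 ∧
      (∀ n : ℕ, μ {ω | R ω = n} ≤ ENNReal.ofReal (C₂ * ρ₂ ^ n)) ∧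
      ∃ C₂' : ℝ, 0 < C₂' ∧ ∀ N : ℕ, μ {ω | N < R ω} ≤ ENNReal.ofReal (C₂' * ρ₂ ^ N) := by
  obtain ⟨ρ₁, hρ₀₁, hρ₁⟩ := exists_between hρ₀1
  have hρ₁0 : 0 < ρ₁ := hρ₀0.trans hρ₀₁
  have hM : 0 < C₀ / (1 - ρ₁) := div_pos hC₀ (sub_pos.2 hρ₁)
  have hσ : 0 < ρ₀ / ρ₁ := div_pos hρ₀0 hρ₁0
  obtain ⟨θ, hθ0, hθ1, hc⟩ :=
    exists_rpow_mul_rpow_lt_one (by linarith) (by linarith : 1 - a < 1) hM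
  have hρ₂1 : (ρ₀ / ρ₁) ^ θ < 1 := Real.rpow_lt_one hσ.le ((div_lt_one hρ₁0).2 hρ₀₁) hθ0
  have hjoint₀ : ∀ i (k : ℕ → ℕ), μ {ω | ∀ j ∈ Icc 1 i, s j ω = k j}
      ≤ ENNReal.ofReal (∏ j ∈ Icc 1 i, C₀ * ρ₀ ^ k j) := by
    rintro (_ | i) k
    exacts [by simp, hjoint _ i.succ_pos k]
  have hmain := measure_eq_le_of_forall_measure_eq_and_eq_le (by positivity) hc (by positivity)
    fun n i => (measure_eq_and_eq_le_min hC₀.le hρ₀0 hρ₀₁.le hρ₁ hjoint₀ hsurv hR n i).trans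
      (ENNReal.ofReal_le_ofReal (min_pow_le_rpow_pow (by linarith) hσ.le hM.le hθ0.le hθ1.le i n))
  have hC₂ := inv_pos.2 (sub_pos.2 hc)
  refine ⟨_, _, hC₂, by positivity, hρ₂1, hmain, _, mul_pos hC₂ (inv_pos.2 (sub_pos.2 hρ₂1)),
    fun N => ?_⟩
  exact (measure_mono fun ω (h : N < R ω) => h.le).trans
    (measure_le_le_of_forall_measure_eq_le hC₂.le (by positivity) hρ₂1 hmain N)

/-- Abstract coupling-time estimate of Section 7.4: geometric tails of the individual runs
and geometric survival probability give an exponential tail for the total coupling time. -/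
theorem stmt8 {Ω : Type*} [MeasurableSpace Ω] (μ : Measure Ω) [IsProbabilityMeasure μ]
    (s : ℕ → Ω → ℕ) (K : Ω → ℕ) (R : Ω → ℕ)
    (C₀ ρ₀ a : ℝ) (hC₀ : 0 < C₀) (hρ₀0 : 0 < ρ₀) (hρ₀1 : ρ₀ < 1)
    (ha0 : 0 < a) (ha1 : a < 1)
    (hpos : ∀ j ω, 1 ≤ s j ω)
    (hjoint : ∀ i : ℕ, 1 ≤ i → ∀ k : ℕ → ℕ,
      μ {ω | ∀ j ∈ Finset.Icc 1 i, s j ω = k j}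
        ≤ ENNReal.ofReal (∏ j ∈ Finset.Icc 1 i, C₀ * ρ₀ ^ k j))
    (hsurv : ∀ i : ℕ, μ {ω | i ≤ K ω} ≤ ENNReal.ofReal ((1 - a) ^ i))
    (hR : ∀ ω, R ω = ∑ j ∈ Finset.Icc 1 (K ω), s j ω) :
    ∃ C₂ ρ₂ : ℝ, 0 < C₂ ∧ 0 < ρ₂ ∧ ρ₂ < 1 ∧
      (∀ n : ℕ, μ {ω | R ω = n} ≤ ENNReal.ofReal (C₂ * ρ₂ ^ n)) ∧
      ∃ C₂' : ℝ, 0 < C₂' ∧ ∀ N : ℕ, μ {ω | N < R ω} ≤ ENNReal.ofReal (C₂' * ρ₂ ^ N) :=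
  stmt8_general μ s K R C₀ ρ₀ a hC₀ hρ₀0 hρ₀1 ha0 ha1 hjoint hsurv hR
end

section
/- Let T: X → X and suppose a family of probability measures {ν_x} and a measurable partition assignment satisfy the Jacobian identity: for each x, T_*ν_x = ∑_i c_i(x)·ν_{x_i} where c_i(x) ≥ 0 sum to 1. Suppose for some α > 0 and n₀ there holds ∫ S_{n₀}(φ) dν_x ≤ −n₀α/2 for all x, where S_n(φ) = ∑_{k<n} φ∘T^k. Then for every k ≥ 1 and all x, ∫ S_{k n₀}(φ) dν_x ≤ −k n₀ α/2, and for every n ≥ 1, ∫ S_n(φ) dν_x ≤ −nα/2 + C₁ with C₁ = n₀(‖φ‖_∞ + α/2). -/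
/-! Birkhoff sums are additive along orbits, `S_{m+n} = S_m + S_n ∘ T^m`, and integrating
`S_n ∘ T^{n₀}` against `ν_x` is integrating `S_n` against `T^{n₀}_* ν_x = ∑ cᵢ ν_{xᵢ}`, a convex
combination of members of the family. Hence, by induction on `k`, each block of `n₀` steps
contributes at most `-n₀α/2` to `∫ S_{kn₀} dν_x`. For `n = kn₀ + r` with `r < n₀` the remaining
`r` steps contribute at most `rB ≤ n₀B`. -/

open MeasureTheory Finset

theorem integral_sum_smul_measure_le {ι α : Type*} [MeasurableSpace α] {s : Finset ι}
    {μ : ι → Measure α} {c : ι → ℝ} {f : α → ℝ} {a : ℝ} (hc : ∀ i ∈ s, 0 ≤ c i)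
    (hc1 : ∑ i ∈ s, c i = 1) (hf : ∀ i ∈ s, Integrable f (μ i))
    (hle : ∀ i ∈ s, ∫ x, f x ∂μ i ≤ a) :
    ∫ x, f x ∂(∑ i ∈ s, ENNReal.ofReal (c i) • μ i) ≤ a := by
  rw [integral_finsetSum_measure fun i hi => (hf i hi).smul_measure ENNReal.ofReal_ne_top]
  calc ∑ i ∈ s, ∫ x, f x ∂(ENNReal.ofReal (c i) • μ i) = ∑ i ∈ s, c i * ∫ x, f x ∂μ i :=
        sum_congr rfl fun i hi => by
          rw [integral_smul_measure, ENNReal.toReal_ofReal (hc i hi), smul_eq_mul]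
    _ ≤ ∑ i ∈ s, c i * a := sum_le_sum fun i hi => mul_le_mul_of_nonneg_left (hle i hi) (hc i hi)
    _ = a := by rw [← sum_mul, hc1, one_mul]

section BirkhoffSum

variable {X : Type*} {T : X → X}

theorem norm_birkhoffSum_le {E : Type*} [SeminormedAddCommGroup E] {g : X → E} {B : ℝ}
    (hB : ∀ x, ‖g x‖ ≤ B) (n : ℕ) (x : X) : ‖birkhoffSum T g n x‖ ≤ n * B :=
  calc ‖birkhoffSum T g n x‖ ≤ ∑ k ∈ range n, ‖g (T^[k] x)‖ := norm_sum_le _ _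
    _ ≤ n * B := by simpa using sum_le_card_nsmul (range n) _ _ fun k _ => hB (T^[k] x)

variable [MeasurableSpace X]

theorem Measurable.birkhoffSum {M : Type*} [AddCommMonoid M] [MeasurableSpace M]
    [MeasurableAdd₂ M] {g : X → M} (hg : Measurable g) (hT : Measurable T) (n : ℕ) :
    Measurable (birkhoffSum T g n) :=
  Finset.measurable_sum _ fun k _ => hg.comp (hT.iterate k)

variable {g : X → ℝ} {B : ℝ}

theorem integrable_birkhoffSum {μ : Measure X} [IsFiniteMeasure μ] (hT : Measurable T)
    (hg : Measurable g) (hB : ∀ x, |g x| ≤ B) (n : ℕ) : Integrable (birkhoffSum T g n) μ :=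
  .of_bound (hg.birkhoffSum hT n).aestronglyMeasurable _
    (ae_of_all _ (norm_birkhoffSum_le (T := T) hB n))

theorem integral_birkhoffSum_le {μ : Measure X} [IsProbabilityMeasure μ]
    (hB : ∀ x, |g x| ≤ B) (n : ℕ) : ∫ x, birkhoffSum T g n x ∂μ ≤ n * B :=
  (le_abs_self _).trans <| by
    simpa using norm_integral_le_of_norm_le_const (μ := μ) (f := birkhoffSum T g n)
      (ae_of_all _ (norm_birkhoffSum_le hB n))

theorem integral_birkhoffSum_add {μ : Measure X} [IsFiniteMeasure μ] (hT : Measurable T)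
    (hg : Measurable g) (hB : ∀ x, |g x| ≤ B) (m n : ℕ) :
    ∫ x, birkhoffSum T g (m + n) x ∂μ =
      ∫ x, birkhoffSum T g m x ∂μ + ∫ x, birkhoffSum T g n x ∂μ.map T^[m] := by
  rw [integral_map (hT.iterate m).aemeasurable (hg.birkhoffSum hT n).aestronglyMeasurable]
  simp_rw [birkhoffSum_add]
  exact integral_add (integrable_birkhoffSum hT hg hB m)
    ((integrable_birkhoffSum hT hg hB n).comp_measurable (hT.iterate m))

variable {n₀ : ℕ}

theorem integral_birkhoffSum_mul_le {ν : X → Measure X} [∀ x, IsProbabilityMeasure (ν x)]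
    (hT : Measurable T) (hg : Measurable g) (hB : ∀ x, |g x| ≤ B) {a : ℝ}
    (hjac : ∀ x, ∃ (m : ℕ) (c : Fin m → ℝ) (y : Fin m → X),
      (∀ i, 0 ≤ c i) ∧ (∑ i, c i = 1) ∧
      Measure.map (T^[n₀]) (ν x) = ∑ i, ENNReal.ofReal (c i) • ν (y i))
    (hstep : ∀ x, ∫ z, birkhoffSum T g n₀ z ∂ν x ≤ a) (k : ℕ) (x : X) :
    ∫ z, birkhoffSum T g (k * n₀) z ∂ν x ≤ k * a := by
  induction k generalizing x with
  | zero => simp [birkhoffSum_zero']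
  | succ k ih =>
    obtain ⟨m, c, y, hc, hc1, hmap⟩ := hjac x
    have htail : ∫ z, birkhoffSum T g (k * n₀) z ∂(ν x).map T^[n₀] ≤ k * a := by
      rw [hmap]
      exact integral_sum_smul_measure_le (fun i _ => hc i) hc1
        (fun i _ => integrable_birkhoffSum hT hg hB _) (fun i _ => ih (y i))
    rw [add_mul, one_mul, add_comm (k * n₀), integral_birkhoffSum_add hT hg hB]
    push_cast
    linarith [hstep x]

theorem integral_birkhoffSum_le_of_blocks {μ : Measure X} [IsProbabilityMeasure μ]
    (hT : Measurable T) (hg : Measurable g) (hB : ∀ x, |g x| ≤ B) {α : ℝ} (hα : 0 ≤ α)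
    (hn₀ : 0 < n₀) (hblock : ∀ k : ℕ, ∫ z, birkhoffSum T g (k * n₀) z ∂μ ≤ k * (-n₀ * α / 2))
    (n : ℕ) : ∫ z, birkhoffSum T g n z ∂μ ≤ -n * α / 2 + n₀ * (B + α / 2) := by
  obtain ⟨x⟩ := nonempty_of_isProbabilityMeasure μ
  have hB0 : 0 ≤ B := (abs_nonneg _).trans (hB x)
  obtain ⟨k, r, hr, rfl⟩ : ∃ k r, r < n₀ ∧ n = k * n₀ + r :=
    ⟨n / n₀, n % n₀, Nat.mod_lt n hn₀, (Nat.div_add_mod' n n₀).symm⟩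
  have : IsProbabilityMeasure (μ.map T^[k * n₀]) :=
    Measure.isProbabilityMeasure_map (hT.iterate _).aemeasurable
  have hr' : (r : ℝ) ≤ n₀ := by exact_mod_cast hr.le
  rw [integral_birkhoffSum_add hT hg hB]
  push_cast
  linarith [hblock k, integral_birkhoffSum_le (T := T) (μ := μ.map T^[k * n₀]) hB r,
    mul_nonneg (sub_nonneg.2 hr') (by positivity : 0 ≤ B + α / 2)]

end BirkhoffSum

/-- Lemma 5.3: from the Markov/Jacobian decomposition of the pushforward of the reference
measures and a one-block negative average, deduce negative averages for all times. -/
theorem stmt10 {X : Type*} [MeasurableSpace X] (T : X → X) (hT : Measurable T)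
    (ν : X → Measure X) (hprob : ∀ x, IsProbabilityMeasure (ν x))
    (φ : X → ℝ) (hφ : Measurable φ) (B : ℝ) (hB : ∀ x, |φ x| ≤ B)
    (α : ℝ) (hα : 0 < α) (n₀ : ℕ) (hn₀ : 1 ≤ n₀)
    (hjac : ∀ x, ∃ (k : ℕ) (c : Fin k → ℝ) (y : Fin k → X),
      (∀ i, 0 ≤ c i) ∧ (∑ i, c i = 1) ∧
      Measure.map (T^[n₀]) (ν x) = ∑ i, ENNReal.ofReal (c i) • ν (y i))
    (hstep : ∀ x, (∫ z, (∑ k ∈ Finset.range n₀, φ (T^[k] z)) ∂(ν x)) ≤ -(n₀ : ℝ) * α / 2) :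
    (∀ k : ℕ, 1 ≤ k → ∀ x,
      (∫ z, (∑ j ∈ Finset.range (k * n₀), φ (T^[j] z)) ∂(ν x)) ≤ -((k * n₀ : ℕ) : ℝ) * α / 2) ∧
    ∀ n : ℕ, 1 ≤ n → ∀ x,
      (∫ z, (∑ j ∈ Finset.range n, φ (T^[j] z)) ∂(ν x))
        ≤ -(n : ℝ) * α / 2 + (n₀ : ℝ) * (B + α / 2) := by
  have hblock := integral_birkhoffSum_mul_le hT hφ hB hjac hstep
  refine ⟨fun k _ x => ?_, fun n _ x => ?_⟩
  · calc _ ≤ k * (-(n₀ : ℝ) * α / 2) := hblock k x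
      _ = _ := by push_cast; ring
  · exact integral_birkhoffSum_le_of_blocks hT hφ hB hα.le hn₀ (fun k => hblock k x) n
end
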